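/- Let (A,[[·]],≻,⊒) be an extended well-founded monotone partial Σ-algebra and let R and S be TRSs over Σ such that ≻ is a partial model for R and ⊒ is a partial model for S. Then for every ground term s with [[s]] defined: (i) if s →_R t then [[t]] is defined and [[s]] ≻ [[t]]; (ii) if s →_S t then [[t]] is defined and [[s]] ⊒ [[t]]. -/

import Mathlib

namespace LocalTerm

/-- Terms over a signature `F` with arities `ar` and variables `X`. -/
inductive Tm (F : Type) (ar : F → ℕ) (X : Type) : Type
  | var : X → Tm F ar X
  | app : (f : F) → (Fin (ar f) → Tm F ar X) → Tm F ar X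

/-- Substitution. -/
def subst {F : Type} {ar : F → ℕ} {X Y : Type} (σ : X → Tm F ar Y) :
    Tm F ar X → Tm F ar Y
  | .var x => σ x
  | .app f ts => .app f fun i => subst σ (ts i)

/-- One-step rewrite relation of a set `R` of rules (over variables `X`),
acting on terms over variables `V`: a rule instance inside a one-hole context. -/
inductive Rw {F : Type} {ar : F → ℕ} {X V : Type}
    (R : Set (Tm F ar X × Tm F ar X)) : Tm F ar V → Tm F ar V → Prop
  | rule {l r : Tm F ar X} (h : (l, r) ∈ R) (σ : X → Tm F ar V) :
      Rw R (subst σ l) (subst σ r)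
  | ctxt {f : F} {ts : Fin (ar f) → Tm F ar V} (i : Fin (ar f)) {t' : Tm F ar V} :
      Rw R (ts i) t' → Rw R (Tm.app f ts) (Tm.app f (Function.update ts i t'))

/-- The set of variables of a term. -/
def Vars {F : Type} {ar : F → ℕ} {X : Type} : Tm F ar X → Set X
  | .var x => {x}
  | .app _ ts => ⋃ i, Vars (ts i)

/-- `R` is a TRS: no left-hand side is a variable,
and all variables of a right-hand side occur in the left-hand side. -/
def IsTRS {F : Type} {ar : F → ℕ} {X : Type}
    (R : Set (Tm F ar X × Tm F ar X)) : Prop :=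
  ∀ p ∈ R, (∀ x : X, p.1 ≠ Tm.var x) ∧ Vars p.2 ⊆ Vars p.1

/-- A partial interpretation of the function symbols in a set `A`:
for every `n`-ary symbol a partial function `Aⁿ ⇀ A`. -/
abbrev Interp (F : Type) (ar : F → ℕ) (A : Type) : Type :=
  ∀ f : F, (Fin (ar f) → A) → Option A

/-- `Eval I α t a` : the (partial) interpretation of `t` under assignment `α`
is defined and equal to `a`. -/
inductive Eval {F : Type} {ar : F → ℕ} {X A : Type}
    (I : Interp F ar A) (α : X → A) : Tm F ar X → A → Prop
  | var (x : X) : Eval I α (Tm.var x) (α x)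
  | app {f : F} {ts : Fin (ar f) → Tm F ar X} (as : Fin (ar f) → A) {a : A}
      (hts : ∀ i, Eval I α (ts i) (as i)) (hI : I f as = some a) :
      Eval I α (Tm.app f ts) a

/-- A set `T` of ground terms is defined if the interpretation of
every `t ∈ T` is defined. -/
def DefinedOn {F : Type} {ar : F → ℕ} {A : Type}
    (I : Interp F ar A) (T : Set (Tm F ar Empty)) : Prop :=
  ∀ t ∈ T, ∃ a : A, Eval I Empty.elim t a

/-- `succ` is a partial model for `R`: whenever the interpretation of a
left-hand side is defined, the right-hand side is defined as well and the
interpretations are related by `succ`. -/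
def PartialModel {F : Type} {ar : F → ℕ} {X A : Type}
    (I : Interp F ar A) (succ : A → A → Prop)
    (R : Set (Tm F ar X × Tm F ar X)) : Prop :=
  ∀ p ∈ R, ∀ (α : X → A) (a : A), Eval I α p.1 a →
    ∃ b : A, Eval I α p.2 b ∧ succ a b

/-- A partial function is closed w.r.t. a relation. -/
def ClosedFn {A : Type} {n : ℕ} (g : (Fin n → A) → Option A)
    (r : A → A → Prop) : Prop :=
  ∀ (v : Fin n → A) (i : Fin n) (b : A), r (v i) b → (g v).isSome →
    (g (Function.update v i b)).isSome

/-- A partial function is monotone w.r.t. a relation. -/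
def MonoFn {A : Type} {n : ℕ} (g : (Fin n → A) → Option A)
    (r : A → A → Prop) : Prop :=
  ∀ (v : Fin n → A) (i : Fin n) (b : A) (x y : A), r (v i) b →
    g v = some x → g (Function.update v i b) = some y → r x y

/-- `(A, I, r)` is a monotone partial algebra: every interpretation is
closed and monotone with respect to `r`. -/
def MonoAlg {F : Type} {ar : F → ℕ} {A : Type}
    (I : Interp F ar A) (r : A → A → Prop) : Prop :=
  ∀ f : F, ClosedFn (I f) r ∧ MonoFn (I f) r

/-- Well-foundedness: no infinite descending sequence. -/
def WFrel {A : Type} (r : A → A → Prop) : Prop :=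
  ¬ ∃ f : ℕ → A, ∀ n : ℕ, r (f n) (f (n + 1))

/-- `r` is terminating on `T`: no element of `T` starts an infinite `r`-sequence. -/
def SNon {B : Type} (r : B → B → Prop) (T : Set B) : Prop :=
  ∀ t ∈ T, ¬ ∃ f : ℕ → B, f 0 = t ∧ ∀ n : ℕ, r (f n) (f (n + 1))

/-- Relative termination on `T`: no element of `T` starts an infinite
`(r ∪ s)`-sequence containing infinitely many `r`-steps. -/
def SNrelOn {B : Type} (r s : B → B → Prop) (T : Set B) : Prop :=
  ∀ t ∈ T, ¬ ∃ f : ℕ → B, f 0 = t ∧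
    (∀ n : ℕ, r (f n) (f (n + 1)) ∨ s (f n) (f (n + 1))) ∧
    (∀ m : ℕ, ∃ n : ℕ, m ≤ n ∧ r (f n) (f (n + 1)))

/-- Relative termination (on everything). -/
def SNrel {B : Type} (r s : B → B → Prop) : Prop := SNrelOn r s Set.univ

/-!
Induction on the rewrite step. At the root the step replaces an instance `lσ` by `rσ`; the
value of `lσ` is the value of `l` under the assignment `x ↦ [[σ x]]`, and since every variable
of `r` occurs in `l`, that assignment evaluates `rσ` to the value of `r`, so the partial model
condition gives the decrease. Below a function symbol, closedness keeps the value of the context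
defined and monotonicity carries the decrease of the argument up to the whole term.
-/

section Evaluation

variable {F X V A : Type} {ar : F → ℕ} (I : Interp F ar A)

theorem Eval.unique {α : X → A} {t : Tm F ar X} {a b : A}
    (ha : Eval I α t a) (hb : Eval I α t b) : a = b := by
  induction ha generalizing b with
  | var x => cases hb; rfl
  | app as _ hI ih =>
    cases hb with
    | app bs hbs hJ =>
      obtain rfl : as = bs := funext fun i => ih i (hbs i)
      exact Option.some.inj (hI.symm.trans hJ)

theorem eval_subst_of_eval {γ : V → A} {σ : X → Tm F ar V} {α : X → A} {u : Tm F ar X} {a : A}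
    (hσ : ∀ x ∈ Vars u, Eval I γ (σ x) (α x)) (hu : Eval I α u a) :
    Eval I γ (subst σ u) a := by
  induction hu with
  | var x => exact hσ x rfl
  | app as _ hI ih =>
    refine Eval.app as (fun i => ih i fun x hx => hσ x ?_) hI
    exact Set.mem_iUnion.mpr ⟨i, hx⟩

theorem exists_eval_of_eval_subst {γ : V → A} {σ : X → Tm F ar V} {u : Tm F ar X} {a : A}
    (hu : Eval I γ (subst σ u) a) {x : X} (hx : x ∈ Vars u) : ∃ c, Eval I γ (σ x) c := by
  induction u generalizing a with
  | var y =>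
    obtain rfl : x = y := hx
    exact ⟨a, hu⟩
  | app f ts ih =>
    obtain ⟨i, hxi⟩ := Set.mem_iUnion.mp hx
    cases hu with
    | app as hts _ => exact ih i (hts i) hxi

/-- The assignment `x ↦ [[σ x]]_γ`, with an arbitrary value where `σ x` has none. -/
noncomputable def substValuation [Nonempty A] (γ : V → A) (σ : X → Tm F ar V) : X → A :=
  open Classical in
  fun x => if h : ∃ c, Eval I γ (σ x) c then h.choose else Classical.arbitrary A

theorem eval_substValuation [Nonempty A] {γ : V → A} {σ : X → Tm F ar V} {x : X}
    (h : ∃ c, Eval I γ (σ x) c) : Eval I γ (σ x) (substValuation I γ σ x) := by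
  simpa only [substValuation, dif_pos h] using h.choose_spec

theorem eval_substValuation_of_eval_subst [Nonempty A] {γ : V → A} {σ : X → Tm F ar V}
    {u : Tm F ar X} {a : A} (hu : Eval I γ (subst σ u) a) : Eval I (substValuation I γ σ) u a := by
  induction u generalizing a with
  | var x =>
    obtain rfl := Eval.unique I (eval_substValuation I ⟨a, hu⟩) hu
    exact Eval.var x
  | app f ts ih =>
    cases hu with
    | app as hts hI => exact Eval.app as (fun i => ih i (hts i)) hI

end Evaluation

section Decrease

variable {F X V A : Type} {ar : F → ℕ} {I : Interp F ar A} {r : A → A → Prop}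

theorem PartialModel.eval_subst_rhs {R : Set (Tm F ar X × Tm F ar X)}
    (hpm : PartialModel I r R) (hvars : ∀ p ∈ R, Vars p.2 ⊆ Vars p.1)
    {l rhs : Tm F ar X} (hlr : (l, rhs) ∈ R) {γ : V → A} (σ : X → Tm F ar V) {a : A}
    (hl : Eval I γ (subst σ l) a) : ∃ b, Eval I γ (subst σ rhs) b ∧ r a b := by
  have : Nonempty A := ⟨a⟩
  obtain ⟨b, hb, hab⟩ := hpm _ hlr _ a (eval_substValuation_of_eval_subst I hl)
  refine ⟨b, eval_subst_of_eval I (fun x hx => ?_) hb, hab⟩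
  exact eval_substValuation I (exists_eval_of_eval_subst I hl (hvars _ hlr hx))

theorem MonoAlg.eval_update (hmono : MonoAlg I r) {γ : V → A} {f : F}
    {ts : Fin (ar f) → Tm F ar V} {a : A} (hts : Eval I γ (Tm.app f ts) a) (i : Fin (ar f))
    {t' : Tm F ar V} (hdec : ∀ c, Eval I γ (ts i) c → ∃ b, Eval I γ t' b ∧ r c b) :
    ∃ b, Eval I γ (Tm.app f (Function.update ts i t')) b ∧ r a b := by
  cases hts with
  | app as hargs hI =>
    obtain ⟨c, hc, hac⟩ := hdec (as i) (hargs i)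
    obtain ⟨b, hb⟩ := Option.isSome_iff_exists.mp
      ((hmono f).1 as i c hac (Option.isSome_iff_exists.mpr ⟨a, hI⟩))
    refine ⟨b, Eval.app _ (fun j => ?_) hb, (hmono f).2 as i c a b hac hI hb⟩
    rcases eq_or_ne j i with rfl | hj
    · simpa only [Function.update_self] using hc
    · simpa only [Function.update_of_ne hj] using hargs j

theorem Rw.eval_decreasing {R : Set (Tm F ar X × Tm F ar X)}
    (hmono : MonoAlg I r) (hpm : PartialModel I r R) (hvars : ∀ p ∈ R, Vars p.2 ⊆ Vars p.1)
    {γ : V → A} {s t : Tm F ar V} (hst : Rw R s t) {a : A} (hs : Eval I γ s a) :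
    ∃ b, Eval I γ t b ∧ r a b := by
  induction hst generalizing a with
  | rule hlr σ => exact hpm.eval_subst_rhs hvars hlr σ hs
  | ctxt i _ ih => exact hmono.eval_update hs i fun _ => ih

end Decrease

theorem eval_decreasing_of_partial_models_general
    {F X A : Type} {ar : F → ℕ}
    (R S : Set (Tm F ar X × Tm F ar X)) (hR : IsTRS R) (hS : IsTRS S)
    (I : Interp F ar A) (succ sq : A → A → Prop)
    (hmono1 : MonoAlg I succ) (hmono2 : MonoAlg I sq)
    (hpmR : PartialModel I succ R) (hpmS : PartialModel I sq S)
    (s : Tm F ar Empty) (a : A) (hs : Eval I Empty.elim s a) :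
    (∀ t : Tm F ar Empty, Rw R s t →
        ∃ b : A, Eval I Empty.elim t b ∧ succ a b) ∧
    (∀ t : Tm F ar Empty, Rw S s t →
        ∃ b : A, Eval I Empty.elim t b ∧ sq a b) :=
  ⟨fun _ ht => ht.eval_decreasing hmono1 hpmR (fun p hp => (hR p hp).2) hs,
   fun _ ht => ht.eval_decreasing hmono2 hpmS (fun p hp => (hS p hp).2) hs⟩

/-- (Lemma on decreasingness.) Let `(A, I, succ, sq)` be an
extended well-founded monotone partial Σ-algebra, `succ` a partial model for
`R` and `sq` a partial model for `S`. Then for every ground term `s` whose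
interpretation is defined: an `R`-step decreases the interpretation w.r.t.
`succ`, and an `S`-step decreases it w.r.t. `sq` (in particular the
interpretation of the reduct is defined). -/
theorem eval_decreasing_of_partial_models
    {F X A : Type} {ar : F → ℕ} [Nonempty A]
    (R S : Set (Tm F ar X × Tm F ar X)) (hR : IsTRS R) (hS : IsTRS S)
    (I : Interp F ar A) (succ sq : A → A → Prop)
    (hmono1 : MonoAlg I succ) (hmono2 : MonoAlg I sq)
    (hwf : SNrel succ sq)
    (hpmR : PartialModel I succ R) (hpmS : PartialModel I sq S)
    (s : Tm F ar Empty) (a : A) (hs : Eval I Empty.elim s a) :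
    (∀ t : Tm F ar Empty, Rw R s t →
        ∃ b : A, Eval I Empty.elim t b ∧ succ a b) ∧
    (∀ t : Tm F ar Empty, Rw S s t →
        ∃ b : A, Eval I Empty.elim t b ∧ sq a b) :=
  eval_decreasing_of_partial_models_general R S hR hS I succ sq hmono1 hmono2 hpmR hpmS s a hs

end LocalTerm
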